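/- Fix a real number a > 0 and define v : ℝ × ℝ → ℝ by v(x,y) = log( a^2 / (π (x^2 + y^2 + a^2)^2) ). Then v is smooth and at every point (x,y) the sum of its two pure second partial derivatives satisfies ∂²v/∂x² + ∂²v/∂y² = −8 a^2 / (x^2 + y^2 + a^2)^2; in particular the Laplacian of v is everywhere strictly negative, so the logarithm of g_a(z) = a^2 / (π (|z|^2 + a^2)^2) is superharmonic on ℂ. -/

import Mathlib

open Real

lemma log_g_eq (a c : ℝ) (ha : 0 < a) (hc : 0 < c) :
    (fun t : ℝ => Real.log (a ^ 2 / (π * (t ^ 2 + c) ^ 2))) =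
      fun t : ℝ => Real.log (a ^ 2) - Real.log π - 2 * Real.log (t ^ 2 + c) := by
  funext t
  have h1 : (0:ℝ) < t ^ 2 + c := by positivity
  rw [Real.log_div (by positivity) (by positivity),
    Real.log_mul (by positivity) (by positivity), Real.log_pow, Real.log_pow]
  push_cast; ring

lemma deriv1 (a c : ℝ) (ha : 0 < a) (hc : 0 < c) :
    deriv (fun t : ℝ => Real.log (a ^ 2 / (π * (t ^ 2 + c) ^ 2))) =
      fun t : ℝ => -4 * t / (t ^ 2 + c) := by
  rw [log_g_eq a c ha hc]
  funext t
  have h1 : (0:ℝ) < t ^ 2 + c := by positivity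
  have hd : HasDerivAt (fun t : ℝ => Real.log (a ^ 2) - Real.log π - 2 * Real.log (t ^ 2 + c))
      (-4 * t / (t ^ 2 + c)) t := by
    have h2 : HasDerivAt (fun t : ℝ => t ^ 2 + c) (2 * t) t := by
      simpa using ((hasDerivAt_pow 2 t).add_const c)
    have h3 := (h2.log h1.ne')
    have h4 := (h3.const_mul (2:ℝ)).const_sub (Real.log (a ^ 2) - Real.log π)
    have : -4 * t / (t ^ 2 + c) = -(2 * (2 * t / (t ^ 2 + c))) := by ring
    rw [this]; exact h4
  exact hd.deriv

lemma second_deriv (a c : ℝ) (ha : 0 < a) (hc : 0 < c) (x : ℝ) :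
    iteratedDeriv 2 (fun t : ℝ => Real.log (a ^ 2 / (π * (t ^ 2 + c) ^ 2))) x =
      (4 * x ^ 2 - 4 * c) / (x ^ 2 + c) ^ 2 := by
  rw [iteratedDeriv_succ, iteratedDeriv_one, deriv1 a c ha hc]
  have h1 : (0:ℝ) < x ^ 2 + c := by positivity
  have hnum : HasDerivAt (fun t : ℝ => -4 * t) (-4 : ℝ) x := by
    simpa using (hasDerivAt_id x).const_mul (-4 : ℝ)
  have hden : HasDerivAt (fun t : ℝ => t ^ 2 + c) (2 * x) x := by
    simpa using ((hasDerivAt_pow 2 x).add_const c)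
  have hd : HasDerivAt (fun t : ℝ => -4 * t / (t ^ 2 + c)) _ x := hnum.div hden h1.ne'
  rw [hd.deriv]
  field_simp; ring

/-- For `a > 0`, the function `v(x,y) = log (a^2 / (π (x^2 + y^2 + a^2)^2))` is smooth
and its Laplacian equals `-8 a^2 / (x^2 + y^2 + a^2)^2`, which is everywhere strictly
negative, so `log g_a` is superharmonic on `ℂ ≅ ℝ²`. -/
theorem laplacian_log_g_neg (a : ℝ) (ha : 0 < a) :
    ContDiff ℝ (⊤ : ℕ∞)
      (fun p : ℝ × ℝ => Real.log (a ^ 2 / (π * (p.1 ^ 2 + p.2 ^ 2 + a ^ 2) ^ 2))) ∧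
    ∀ x y : ℝ,
      iteratedDeriv 2
          (fun t : ℝ => Real.log (a ^ 2 / (π * (t ^ 2 + y ^ 2 + a ^ 2) ^ 2))) x +
          iteratedDeriv 2
            (fun t : ℝ => Real.log (a ^ 2 / (π * (x ^ 2 + t ^ 2 + a ^ 2) ^ 2))) y =
        -8 * a ^ 2 / (x ^ 2 + y ^ 2 + a ^ 2) ^ 2 ∧
      -8 * a ^ 2 / (x ^ 2 + y ^ 2 + a ^ 2) ^ 2 < 0 := by
  constructor
  · have hf : ContDiff ℝ (⊤ : ℕ∞) (fun p : ℝ × ℝ =>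
        a ^ 2 / (π * (p.1 ^ 2 + p.2 ^ 2 + a ^ 2) ^ 2)) := by
      apply ContDiff.div contDiff_const
      · fun_prop
      · intro p
        have : (0:ℝ) < p.1 ^ 2 + p.2 ^ 2 + a ^ 2 := by positivity
        positivity
    exact hf.log (fun p => by
      have : (0:ℝ) < p.1 ^ 2 + p.2 ^ 2 + a ^ 2 := by positivity
      positivity)
  · intro x y
    have D : (0:ℝ) < x ^ 2 + y ^ 2 + a ^ 2 := by positivity
    refine ⟨?_, div_neg_of_neg_of_pos (by nlinarith) (by positivity)⟩
    have e1 : (fun t : ℝ => Real.log (a ^ 2 / (π * (t ^ 2 + y ^ 2 + a ^ 2) ^ 2))) =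
        fun t : ℝ => Real.log (a ^ 2 / (π * (t ^ 2 + (y ^ 2 + a ^ 2)) ^ 2)) := by
      funext t; congr 2; ring
    have e2 : (fun t : ℝ => Real.log (a ^ 2 / (π * (x ^ 2 + t ^ 2 + a ^ 2) ^ 2))) =
        fun t : ℝ => Real.log (a ^ 2 / (π * (t ^ 2 + (x ^ 2 + a ^ 2)) ^ 2)) := by
      funext t; congr 2; ring
    rw [e1, e2, second_deriv a _ ha (by positivity) x, second_deriv a _ ha (by positivity) y]
    field_simp; ring
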